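/- arXiv:2509.05571 — 2 statements merged into one kernel-verified Lean document; each statement's English description precedes it below -/
import Mathlib

section
/- Let n = 2, let d_1, d_2 be unit vectors in ℂ^m, and let ρ_A be a density matrix on ℂ² with q_i = (ρ_A)_{ii}. Then equality holds: (P_s(q) − 1/2)² + V(ρ̃_A)² = 1/4 − (1/2)·(Tr(ρ̃_D²) − Tr(ρ̃_A²)). -/
/-!
For a two-outcome POVM `{P, 1 - P}` put `a = ⟨d₀, P d₀⟩` and `b = ⟨d₁, P d₁⟩`. Cauchy–Schwarz for
the positive forms `P` and `1 - P` gives `|⟨d₀, d₁⟩| ≤ √(ab) + √((1 - a)(1 - b))`, which bounds the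
success probability `q₀ a + q₁ (1 - b)` by the Helstrom value `(1 + √(1 - 4 q₀ q₁ |⟨d₀, d₁⟩|²)) / 2`;
the projector onto the eigenvector of `q₀ d₀ d₀* - q₁ d₁ d₁*` for its positive eigenvalue attains
it. Both purities and the visibility are explicit in `|⟨d₀, d₁⟩|` and `|(ρ_A)₀₁|`, and the identity
becomes algebra.
-/

open Matrix ComplexOrder

noncomputable section

/-- Inner product ⟨a, b⟩ = ∑ i, conj (a i) * b i on a finite-dimensional complex space. -/
def ip {k : Type*} [Fintype k] (a b : k → ℂ) : ℂ := ∑ i, star (a i) * b i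

/-- The optimal success probability of minimum-error discrimination of the detector
states `d i` with prior probabilities `q i`: the supremum over all POVMs
`Pov` (positive semidefinite matrices summing to the identity) of
`∑ i, q i * ⟨d i, Pov i (d i)⟩`. -/
def Ps {m n : ℕ} (d : Fin n → Fin m → ℂ) (q : Fin n → ℝ) : ℝ :=
  sSup { x : ℝ | ∃ Pov : Fin n → Matrix (Fin m) (Fin m) ℂ,
    (∀ i, (Pov i).PosSemidef) ∧ (∑ i, Pov i) = 1 ∧
    x = ∑ i, q i * (ip (d i) ((Pov i) *ᵥ (d i))).re }

/-- The visibility `V(ρ̃_A) = √( (2(n−1)/n²) ∑_{i≠k} |⟨d_k, d_i⟩|² |(ρ_A)_{ik}|² )`. -/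
def Vis {m n : ℕ} (d : Fin n → Fin m → ℂ) (ρ : Matrix (Fin n) (Fin n) ℂ) : ℝ :=
  Real.sqrt ((2 * ((n : ℝ) - 1) / (n : ℝ) ^ 2) *
    ∑ i, ∑ k, if i = k then 0 else ‖ip (d k) (d i)‖ ^ 2 * ‖ρ i k‖ ^ 2)

/-- The post-interaction detector state `ρ̃_D = ∑ i, q i • d i (d i)^*`. -/
def detState {m n : ℕ} (d : Fin n → Fin m → ℂ) (q : Fin n → ℝ) :
    Matrix (Fin m) (Fin m) ℂ :=
  ∑ i, (q i : ℂ) • vecMulVec (d i) (star (d i))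

/-- The post-interaction particle state `(ρ̃_A)_{ik} = ⟨d_k, d_i⟩ (ρ_A)_{ik}`. -/
def post {m n : ℕ} (d : Fin n → Fin m → ℂ) (ρ : Matrix (Fin n) (Fin n) ℂ) :
    Matrix (Fin n) (Fin n) ℂ :=
  Matrix.of fun i k => ip (d k) (d i) * ρ i k

/-- The purity `Tr(ρ²)` (as a real number). -/
def purity {k : Type*} [Fintype k] (ρ : Matrix k k ℂ) : ℝ := ((ρ * ρ).trace).re

section InnerProduct

variable {k : Type*} [Fintype k]

lemma ip_eq_star_dotProduct (a b : k → ℂ) : ip a b = star a ⬝ᵥ b := rfl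

lemma ip_eq_inner (a b : k → ℂ) :
    ip a b = inner ℂ (WithLp.toLp 2 a : EuclideanSpace ℂ k) (WithLp.toLp 2 b) := by
  rw [EuclideanSpace.inner_toLp_toLp, dotProduct_comm, ip_eq_star_dotProduct]

lemma star_ip (a b : k → ℂ) : star (ip a b) = ip b a := by
  simp only [ip, star_sum, star_mul', star_star, mul_comm]

lemma norm_ip_comm (a b : k → ℂ) : ‖ip a b‖ = ‖ip b a‖ := by
  rw [← star_ip, norm_star]

lemma ip_sub_right (a b c : k → ℂ) : ip a (b - c) = ip a b - ip a c := dotProduct_sub _ _ _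

lemma ip_smul_right (a b : k → ℂ) (z : ℂ) : ip a (z • b) = z * ip a b := dotProduct_smul _ _ _

lemma ip_smul_left (a b : k → ℂ) (z : ℂ) : ip (z • a) b = star z * ip a b := by
  rw [ip_eq_star_dotProduct, star_smul, smul_dotProduct, smul_eq_mul, ip_eq_star_dotProduct]

lemma ip_mul_ip_swap_eq_norm_sq (a b : k → ℂ) : ip a b * ip b a = (‖ip a b‖ ^ 2 : ℝ) := by
  rw [← star_ip a b, Complex.star_def, Complex.mul_conj', Complex.ofReal_pow]

lemma norm_ip_sq_le (a b : k → ℂ) : ‖ip a b‖ ^ 2 ≤ (ip a a).re * (ip b b).re := by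
  have h := inner_mul_inner_self_le (𝕜 := ℂ) (WithLp.toLp 2 a : EuclideanSpace ℂ k)
    (WithLp.toLp 2 b)
  rw [← ip_eq_inner, ← ip_eq_inner, ← ip_eq_inner, ← ip_eq_inner, ← star_ip a b, norm_star,
    ← sq] at h
  exact h

lemma ip_vecMulVec_mulVec (e x y : k → ℂ) :
    ip x (vecMulVec e (star e) *ᵥ y) = ip x e * ip e y := by
  rw [ip_eq_star_dotProduct, vecMulVec_mulVec, dotProduct_smul, op_smul_eq_mul]; rfl

lemma re_ip_vecMulVec_mulVec_self (e x : k → ℂ) :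
    (ip x (vecMulVec e (star e) *ᵥ x)).re = ‖ip x e‖ ^ 2 := by
  rw [ip_vecMulVec_mulVec, ip_mul_ip_swap_eq_norm_sq, Complex.ofReal_re]

open scoped MatrixOrder in
lemma Matrix.PosSemidef.norm_ip_mulVec_sq_le {P : Matrix k k ℂ} (hP : P.PosSemidef)
    (x y : k → ℂ) :
    ‖ip x (P *ᵥ y)‖ ^ 2 ≤ (ip x (P *ᵥ x)).re * (ip y (P *ᵥ y)).re := by
  classical
  obtain ⟨B, rfl⟩ := CStarAlgebra.nonneg_iff_eq_star_mul_self.mp hP.nonneg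
  have hB (a b : k → ℂ) : ip a ((star B * B) *ᵥ b) = ip (B *ᵥ a) (B *ᵥ b) := by
    rw [ip_eq_star_dotProduct, ← mulVec_mulVec, dotProduct_mulVec, star_eq_conjTranspose,
      vecMul_conjTranspose, star_star, ip_eq_star_dotProduct]
  simpa only [hB] using norm_ip_sq_le (B *ᵥ x) (B *ᵥ y)

lemma isStarProjection_vecMulVec {e : k → ℂ} (he : ip e e = 1) :
    IsStarProjection (vecMulVec e (star e)) where
  isIdempotentElem := by
    rw [IsIdempotentElem, vecMulVec_mul_vecMulVec, ← ip_eq_star_dotProduct, he, one_smul]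
  isSelfAdjoint := by
    rw [IsSelfAdjoint, star_eq_conjTranspose, conjTranspose_vecMulVec, star_star]

lemma exists_isStarProjection_re_ip_mulVec_self {w : k → ℂ} {N : ℝ} (hN : 0 < N)
    (hww : ip w w = N) :
    ∃ P : Matrix k k ℂ, IsStarProjection P ∧ ∀ x, (ip x (P *ᵥ x)).re = ‖ip x w‖ ^ 2 / N := by
  set e := (((√N)⁻¹ : ℝ) : ℂ) • w
  have he : ip e e = 1 := by
    rw [ip_smul_left, ip_smul_right, hww, Complex.star_def, Complex.conj_ofReal, ← mul_assoc,
      ← Complex.ofReal_mul, ← Complex.ofReal_mul, ← sq, inv_pow, Real.sq_sqrt hN.le,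
      inv_mul_cancel₀ hN.ne', Complex.ofReal_one]
  refine ⟨vecMulVec e (star e), isStarProjection_vecMulVec he, fun x => ?_⟩
  rw [re_ip_vecMulVec_mulVec_self, ip_smul_right, norm_mul, Complex.norm_real, Real.norm_eq_abs,
    mul_pow, sq_abs, inv_pow, Real.sq_sqrt hN.le, inv_mul_eq_div]

lemma sq_sub_le_one_sub_four_mul_norm_ip_sq {u v : k → ℂ} (hu : ip u u = 1) (hv : ip v v = 1)
    {p r : ℝ} (hp : 0 ≤ p) (hr : 0 ≤ r) (hpr : p + r = 1) :
    (p - r) ^ 2 ≤ 1 - 4 * p * r * ‖ip u v‖ ^ 2 := by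
  have hg1 := norm_ip_sq_le u v
  rw [hu, hv, Complex.one_re, one_mul] at hg1
  have hpr' : (p - r) ^ 2 = 1 - 4 * p * r := by linear_combination (p + r + 1) * hpr
  nlinarith [mul_nonneg hp hr]

lemma ip_of_eq_smul_sub_smul {u v w : k → ℂ} (hu : ip u u = 1) (hv : ip v v = 1) {r l : ℝ}
    (hw : w = ((r + l : ℝ) : ℂ) • u - ((r : ℂ) * ip v u) • v) :
    ip u w = (r + l - r * ‖ip u v‖ ^ 2 : ℝ) ∧ ip v w = l * ip v u ∧
      ip w w = ((r + l) * (r + l - r * ‖ip u v‖ ^ 2) - r * l * ‖ip u v‖ ^ 2 : ℝ) := by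
  have hgc := ip_mul_ip_swap_eq_norm_sq u v
  push_cast at hgc ⊢
  have hwu : ip u w = r + l - r * ‖ip u v‖ ^ 2 := by
    rw [hw, ip_sub_right, ip_smul_right, ip_smul_right, hu]
    push_cast
    linear_combination -(r : ℂ) * hgc
  have hwv : ip v w = l * ip v u := by
    rw [hw, ip_sub_right, ip_smul_right, ip_smul_right, hv]
    push_cast
    ring
  refine ⟨hwu, hwv, ?_⟩
  calc ip w w = ((r + l : ℝ) : ℂ) * star (ip u w) - (r * ip v u) * star (ip v w) := by
        rw [star_ip, star_ip, ← ip_smul_right, ← ip_smul_right, ← ip_sub_right, ← hw]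
    _ = _ := by
        rw [hwu, hwv, star_mul', star_ip]
        simp only [star_sub, star_add, star_mul', Complex.star_def, Complex.conj_ofReal, map_pow]
        push_cast
        linear_combination -(r * l : ℂ) * hgc

end InnerProduct

lemma Matrix.IsHermitian.norm_apply_comm {n : Type*} {ρ : Matrix n n ℂ} (hρ : ρ.IsHermitian)
    (i j : n) : ‖ρ i j‖ = ‖ρ j i‖ := by
  rw [← hρ.apply, norm_star]

lemma sq_two_mul_sub_one_le {p r x x' y y' g : ℝ} (hp : 0 ≤ p) (hr : 0 ≤ r) (hpr : p + r = 1)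
    (hx : x ^ 2 + x' ^ 2 = 1) (hy : y ^ 2 + y' ^ 2 = 1) (hg : 0 ≤ g)
    (hgxy : g ≤ x * y + x' * y') :
    (2 * (p * x ^ 2 + r * y' ^ 2) - 1) ^ 2 ≤ 1 - 4 * p * r * g ^ 2 := by
  have key : (2 * (p * x ^ 2 + r * y' ^ 2) - 1) ^ 2 + 4 * p * r * (x * y + x' * y') ^ 2
      = 1 - 4 * (p * x * x' - r * y * y') ^ 2 := by
    linear_combination 4 * (p * x ^ 2 + r * y' ^ 2) * (p * hx + r * hy + hpr)
  have hg2 : g ^ 2 ≤ (x * y + x' * y') ^ 2 := pow_le_pow_left₀ hg hgxy 2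
  nlinarith [mul_nonneg hp hr, sq_nonneg (p * x * x' - r * y * y')]

section Helstrom

variable {k : Type*} [Fintype k] [DecidableEq k]

lemma success_le_helstrom {u v : k → ℂ} (hu : ip u u = 1) (hv : ip v v = 1)
    {p r : ℝ} (hp : 0 ≤ p) (hr : 0 ≤ r) (hpr : p + r = 1) {P : Matrix k k ℂ}
    (hP : P.PosSemidef) (hP' : (1 - P).PosSemidef) :
    p * (ip u (P *ᵥ u)).re + r * (ip v ((1 - P) *ᵥ v)).re ≤
      (1 + √(1 - 4 * p * r * ‖ip u v‖ ^ 2)) / 2 := by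
  have hcompl (x y : k → ℂ) : ip x ((1 - P) *ᵥ y) = ip x y - ip x (P *ᵥ y) := by
    rw [sub_mulVec, one_mulVec, ip_sub_right]
  set a := (ip u (P *ᵥ u)).re
  set b := (ip v (P *ᵥ v)).re
  have ha' : (ip u ((1 - P) *ᵥ u)).re = 1 - a := by
    rw [hcompl, Complex.sub_re, hu, Complex.one_re]
  have hb' : (ip v ((1 - P) *ᵥ v)).re = 1 - b := by
    rw [hcompl, Complex.sub_re, hv, Complex.one_re]
  have ha : 0 ≤ a := hP.re_dotProduct_nonneg u
  have hb : 0 ≤ b := hP.re_dotProduct_nonneg v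
  have ha1 : 0 ≤ 1 - a := ha' ▸ hP'.re_dotProduct_nonneg u
  have hb1 : 0 ≤ 1 - b := hb' ▸ hP'.re_dotProduct_nonneg v
  have norm_le {z : ℂ} {A B : ℝ} (hA : 0 ≤ A) (h : ‖z‖ ^ 2 ≤ A * B) : ‖z‖ ≤ √A * √B := by
    rw [← Real.sqrt_mul hA]
    exact (abs_norm z).symm.trans_le (Real.abs_le_sqrt h)
  have hsplit : ‖ip u v‖ ≤ √a * √b + √(1 - a) * √(1 - b) :=
    calc ‖ip u v‖ = ‖ip u (P *ᵥ v) + ip u ((1 - P) *ᵥ v)‖ := by rw [hcompl, add_sub_cancel]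
      _ ≤ ‖ip u (P *ᵥ v)‖ + ‖ip u ((1 - P) *ᵥ v)‖ := norm_add_le _ _
      _ ≤ _ := add_le_add (norm_le ha (hP.norm_ip_mulVec_sq_le u v))
          (norm_le ha1 (by simpa only [ha', hb'] using hP'.norm_ip_mulVec_sq_le u v))
  have hbound := sq_two_mul_sub_one_le hp hr hpr (by rw [Real.sq_sqrt ha, Real.sq_sqrt ha1]; ring)
    (by rw [Real.sq_sqrt hb, Real.sq_sqrt hb1]; ring) (norm_nonneg _) hsplit
  rw [Real.sq_sqrt ha, Real.sq_sqrt hb1] at hbound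
  rw [hb']
  linarith [le_abs_self (2 * (p * a + r * (1 - b)) - 1), Real.abs_le_sqrt hbound]

lemma exists_isStarProjection_success_eq_of_eigenvalue {u v : k → ℂ} (hu : ip u u = 1)
    (hv : ip v v = 1) {p r l : ℝ} (hr : 0 ≤ r) (hl : 0 ≤ l)
    (hchar : l ^ 2 = (p - r) * l + p * r * (1 - ‖ip u v‖ ^ 2)) :
    ∃ P : Matrix k k ℂ, IsStarProjection P ∧
      p * (ip u (P *ᵥ u)).re + r * (ip v ((1 - P) *ᵥ v)).re = r + l := by
  rcases hl.eq_or_lt with rfl | hlpos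
  · refine ⟨0, .zero _, ?_⟩
    rw [zero_mulVec, sub_zero, one_mulVec, hv]
    simp [ip]
  -- an eigenvector of `p u u* - r v v*` for the eigenvalue `l`
  set w : k → ℂ := ((r + l : ℝ) : ℂ) • u - ((r : ℂ) * ip v u) • v with hw
  obtain ⟨hwu, hwv, hww⟩ := ip_of_eq_smul_sub_smul hu hv hw
  set g := ‖ip u v‖
  have hg1 : g ^ 2 ≤ 1 := by
    have h := norm_ip_sq_le u v
    rwa [hu, hv, Complex.one_re, one_mul] at h
  set a := r + l - r * g ^ 2 with ha_def
  set N := (r + l) * a - r * l * g ^ 2 with hN_def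
  have hN : a ^ 2 ≤ N := by
    simpa [hu, hww, hwu, Complex.norm_real, sq_abs] using norm_ip_sq_le u w
  have ha : 0 < a := by nlinarith [mul_nonneg hr (sub_nonneg.2 hg1)]
  have hNpos : 0 < N := (pow_pos ha 2).trans_le hN
  obtain ⟨P, hP, hPx⟩ := exists_isStarProjection_re_ip_mulVec_self hNpos hww
  refine ⟨P, hP, ?_⟩
  rw [sub_mulVec, one_mulVec, ip_sub_right, Complex.sub_re, hPx, hPx, hv, Complex.one_re, hwu,
    hwv, norm_mul, norm_ip_comm v u]
  simp only [Complex.norm_real, Real.norm_eq_abs, mul_pow, sq_abs]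
  have key : p * a ^ 2 - r * l ^ 2 * g ^ 2 = l * N := by
    rw [hN_def]
    linear_combination (a * p) * ha_def - a * hchar
  field_simp
  linear_combination key

lemma exists_isStarProjection_success_eq_helstrom {u v : k → ℂ} (hu : ip u u = 1)
    (hv : ip v v = 1) {p r : ℝ} (hp : 0 ≤ p) (hr : 0 ≤ r) (hpr : p + r = 1) :
    ∃ P : Matrix k k ℂ, IsStarProjection P ∧
      p * (ip u (P *ᵥ u)).re + r * (ip v ((1 - P) *ᵥ v)).re =
        (1 + √(1 - 4 * p * r * ‖ip u v‖ ^ 2)) / 2 := by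
  have hdisc := sq_sub_le_one_sub_four_mul_norm_ip_sq hu hv hp hr hpr
  have hs2 := Real.sq_sqrt ((sq_nonneg _).trans hdisc)
  have hs := Real.abs_le_sqrt hdisc
  -- the positive eigenvalue of `p u u* - r v v*`
  obtain ⟨P, hP, hval⟩ := exists_isStarProjection_success_eq_of_eigenvalue hu hv hr
    (l := (p - r + √(1 - 4 * p * r * ‖ip u v‖ ^ 2)) / 2)
    (by linarith [neg_abs_le (p - r)]) (by linear_combination hs2 / 4 - (1 + p + r) / 4 * hpr)
  exact ⟨P, hP, by linarith⟩

end Helstrom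

open scoped MatrixOrder in
theorem Ps_two {m : ℕ} {d : Fin 2 → Fin m → ℂ} (hd : ∀ i, ip (d i) (d i) = 1) {q : Fin 2 → ℝ}
    (hq : ∀ i, 0 ≤ q i) (hsum : q 0 + q 1 = 1) :
    Ps d q = (1 + √(1 - 4 * q 0 * q 1 * ‖ip (d 0) (d 1)‖ ^ 2)) / 2 := by
  refine IsGreatest.csSup_eq ⟨?_, ?_⟩
  · obtain ⟨P, hP, hval⟩ :=
      exists_isStarProjection_success_eq_helstrom (hd 0) (hd 1) (hq 0) (hq 1) hsum
    refine ⟨![P, 1 - P], fun i => ?_, by simp, by simp [Fin.sum_univ_two, hval]⟩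
    fin_cases i
    exacts [hP.nonneg.posSemidef, hP.one_sub_nonneg.posSemidef]
  · rintro x ⟨Pov, hPov, hPov_sum, rfl⟩
    have h1 : Pov 1 = 1 - Pov 0 := by rw [← hPov_sum, Fin.sum_univ_two, add_sub_cancel_left]
    rw [Fin.sum_univ_two, h1]
    exact success_le_helstrom (hd 0) (hd 1) (hq 0) (hq 1) hsum (hPov 0) (h1 ▸ hPov 1)

lemma purity_detState {m n : ℕ} (d : Fin n → Fin m → ℂ) (q : Fin n → ℝ) :
    purity (detState d q) = ∑ i, ∑ j, q i * q j * ‖ip (d i) (d j)‖ ^ 2 := by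
  simp only [purity, detState, Finset.sum_mul, Finset.mul_sum, trace_sum, smul_mul_smul_comm,
    trace_smul, vecMulVec_mul_vecMulVec, trace_vecMulVec, Complex.re_sum]
  rw [Finset.sum_comm]
  refine Finset.sum_congr rfl fun i _ => Finset.sum_congr rfl fun j _ => ?_
  rw [← ip_eq_star_dotProduct, dotProduct_smul, dotProduct_comm, ← ip_eq_star_dotProduct,
    smul_eq_mul, smul_eq_mul, ip_mul_ip_swap_eq_norm_sq, ← Complex.ofReal_mul, ← Complex.ofReal_mul,
    Complex.ofReal_re]

lemma purity_post {m n : ℕ} (d : Fin n → Fin m → ℂ) {ρ : Matrix (Fin n) (Fin n) ℂ}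
    (hρ : ρ.IsHermitian) :
    purity (post d ρ) = ∑ i, ∑ k, ‖ip (d k) (d i)‖ ^ 2 * ‖ρ i k‖ ^ 2 := by
  simp only [purity, trace, diag_apply, mul_apply, post, of_apply, Complex.re_sum]
  refine Finset.sum_congr rfl fun i _ => Finset.sum_congr rfl fun k _ => ?_
  rw [← hρ.apply k i, mul_mul_mul_comm, ip_mul_ip_swap_eq_norm_sq, Complex.star_def, Complex.mul_conj',
    ← Complex.ofReal_pow, ← Complex.ofReal_mul, Complex.ofReal_re]

lemma Vis_two {m : ℕ} (d : Fin 2 → Fin m → ℂ) {ρ : Matrix (Fin 2) (Fin 2) ℂ}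
    (hρ : ρ.IsHermitian) :
    Vis d ρ = ‖ip (d 0) (d 1)‖ * ‖ρ 0 1‖ := by
  rw [Vis, ← Real.sqrt_sq (by positivity : 0 ≤ ‖ip (d 0) (d 1)‖ * ‖ρ 0 1‖)]
  congr 1
  simp only [Fin.sum_univ_two, Fin.isValue, if_true, Fin.zero_eq_one_iff,
    Fin.one_eq_zero_iff, norm_ip_comm (d 1), hρ.norm_apply_comm 1 0]
  norm_num
  ring

/-- for the two-path interferometer with detector and quantum memory, the
duality between path distinguishability and visibility is complete (an identity). -/
theorem stmt1 (m : ℕ) (d : Fin 2 → Fin m → ℂ)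
    (hd : ∀ i, ip (d i) (d i) = 1)
    (ρA : Matrix (Fin 2) (Fin 2) ℂ) (hpsd : ρA.PosSemidef) (htr : ρA.trace = 1)
    (q : Fin 2 → ℝ) (hq : ∀ i, (q i : ℂ) = ρA i i) :
    (Ps d q - 1 / 2) ^ 2 + (Vis d ρA) ^ 2 =
      1 / 4 - (1 / 2) * (purity (detState d q) - purity (post d ρA)) := by
  have hq_nonneg (i : Fin 2) : 0 ≤ q i := Complex.zero_le_real.mp (hq i ▸ hpsd.diag_nonneg)
  have hq_sum : q 0 + q 1 = 1 := by
    have h : ((q 0 + q 1 : ℝ) : ℂ) = 1 := by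
      rw [Complex.ofReal_add, hq 0, hq 1, ← trace_fin_two, htr]
    exact_mod_cast h
  have hdisc := sq_sub_le_one_sub_four_mul_norm_ip_sq (hd 0) (hd 1) (hq_nonneg 0) (hq_nonneg 1)
    hq_sum
  have hdiag (i : Fin 2) : ‖ρA i i‖ = q i := by
    rw [← hq i, Complex.norm_real, Real.norm_of_nonneg (hq_nonneg i)]
  have hunit (i : Fin 2) : ‖ip (d i) (d i)‖ = 1 := by rw [hd i, norm_one]
  rw [Ps_two hd hq_nonneg hq_sum, Vis_two d hpsd.1, purity_detState, purity_post d hpsd.1]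
  simp only [Fin.sum_univ_two, hdiag, hunit, norm_ip_comm (d 1), hpsd.1.norm_apply_comm 1 0]
  linear_combination Real.sq_sqrt ((sq_nonneg _).trans hdisc) / 4
end
end

section
/- Let n ≥ 2, let d_1, …, d_n be unit vectors in ℂ^m, and let q = (q_1,…,q_n) be a probability vector. Then the optimal success probability satisfies P_s(q) ≤ 1/n + (1/n) Σ_{i<k} √( (q_i + q_k)² − 4 q_i q_k |⟨d_i, d_k⟩|² ). -/
/-!
Since `∑ Π_k = 1` and `∑ q_k = 1`, the quantity `n P − 1` for a POVM `Π` is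
`∑_{i,k} q_i ⟨d_i, (Π_i − Π_k) d_i⟩ = ∑_{i<k} (q_i ⟨d_i, A d_i⟩ − q_k ⟨d_k, A d_k⟩)` with
`A = Π_i − Π_k`, and `−1 ≤ A ≤ 1`. For unit vectors `u, v` and `a, b ≥ 0`, the operator
`a u u* − b v v*` equals `w₁ w₁* − w₂ w₂*` for every hyperbolic rotation `(w₁, w₂)` of
`(√a u, −√b e v)`, `e` a phase, so the pair term is at most `‖w₁‖² + ‖w₂‖²`. Along the rotation
parameter this is `(P t + Q / t) / 2` with `P Q = (a + b)² − 4 a b |⟨u, v⟩|²`, and its infimum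
`√(P Q)` (AM–GM) is the trace norm of `a u u* − b v v*`.
-/

open Matrix ComplexOrder

noncomputable section

lemma le_sqrt_mul_of_forall_le_mul_add_div {L P Q : ℝ} (hQ : 0 ≤ Q)
    (h : ∀ t > 0, 2 * L ≤ P * t + Q / t) : L ≤ √(P * Q) := by
  by_cases hPQ : 0 < P ∧ 0 < Q
  · obtain ⟨hP, hQ'⟩ := hPQ
    have hPt : P * (√Q / √P) = √(P * Q) := by
      rw [Real.sqrt_mul hP.le]
      field_simp
      rw [Real.sq_sqrt hP.le]
    have hQt : Q / (√Q / √P) = √(P * Q) := by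
      rw [Real.sqrt_mul hP.le]
      field_simp
      rw [Real.sq_sqrt hQ'.le]
    linarith [h (√Q / √P) (by positivity)]
  · refine le_trans ?_ (Real.sqrt_nonneg _)
    by_contra! hL
    rcases le_or_gt P 0 with hP | hP
    · have hPt : P * ((Q + 1) / L) ≤ 0 := mul_nonpos_of_nonpos_of_nonneg hP (by positivity)
      have hQt : Q / ((Q + 1) / L) < L := by
        rw [div_div_eq_mul_div, div_lt_iff₀ (by positivity)]
        nlinarith
      linarith [h ((Q + 1) / L) (by positivity)]
    · obtain rfl : Q = 0 := by
        by_contra hQ0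
        exact hPQ ⟨hP, lt_of_le_of_ne hQ (Ne.symm hQ0)⟩
      have hPt : P * (L / (P + 1)) < L := by
        rw [mul_div_assoc', div_lt_iff₀ (by positivity)]
        nlinarith
      have := h (L / (P + 1)) (by positivity)
      rw [zero_div, add_zero] at this
      linarith

lemma sum_sum_eq_sum_sum_lt_add {ι M : Type*} [Fintype ι] [LinearOrder ι] [AddCommMonoid M]
    (D : ι → ι → M) (hD : ∀ i, D i i = 0) :
    ∑ i, ∑ j, D i j = ∑ i, ∑ j, if i < j then D i j + D j i else 0 := by
  have hswap : ∑ i, ∑ j, (if i < j then D j i else 0) = ∑ i, ∑ j, if j < i then D i j else 0 :=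
    Finset.sum_comm
  simp only [ite_add_zero, Finset.sum_add_distrib, hswap]
  simp only [← Finset.sum_add_distrib]
  refine Finset.sum_congr rfl fun i _ => Finset.sum_congr rfl fun j _ => ?_
  rcases lt_trichotomy i j with h | rfl | h
  · simp [h, h.not_gt]
  · simp [hD]
  · simp [h, h.not_gt]

section SesquilinearForm

variable {k : Type*} [Fintype k]

lemma ip_swap (u v : k → ℂ) : ip v u = star (ip u v) := by
  simp [ip, mul_comm]

lemma ip_smul_add_smul_mulVec (A : Matrix k k ℂ) (u v : k → ℂ) (α β : ℂ) :
    ip (α • u + β • v) (A *ᵥ (α • u + β • v)) =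
      star α * α * ip u (A *ᵥ u) + star β * β * ip v (A *ᵥ v)
        + star α * β * ip u (A *ᵥ v) + star β * α * ip v (A *ᵥ u) := by
  simp only [ip_eq_star_dotProduct, star_add, star_smul, mulVec_add, mulVec_smul,
    add_dotProduct, dotProduct_add, smul_dotProduct, dotProduct_smul, smul_eq_mul]
  ring

lemma ip_mulVec_sub_of_star_mul_eq (A : Matrix k k ℂ) (u v : k → ℂ) {α β α' β' : ℂ}
    (h : star α * β = star α' * β') :
    ip (α • u + β • v) (A *ᵥ (α • u + β • v)) - ip (α' • u + β' • v) (A *ᵥ (α' • u + β' • v)) =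
      (star α * α - star α' * α') * ip u (A *ᵥ u)
        + (star β * β - star β' * β') * ip v (A *ᵥ v) := by
  have h' : star β * α = star β' * α' := by simpa [mul_comm] using congrArg star h
  rw [ip_smul_add_smul_mulVec, ip_smul_add_smul_mulVec]
  linear_combination ip u (A *ᵥ v) * h + ip v (A *ᵥ u) * h'

lemma sq_mul_re_ip_sub_le (A : Matrix k k ℂ) (hA : ∀ w, |(ip w (A *ᵥ w)).re| ≤ (ip w w).re)
    {u v : k → ℂ} (hu : ip u u = 1) (hv : ip v v = 1) (x y : ℝ) {c s : ℝ}
    (hcs : c ^ 2 - s ^ 2 = 1) :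
    x ^ 2 * (ip u (A *ᵥ u)).re - y ^ 2 * (ip v (A *ᵥ v)).re
      ≤ (x ^ 2 + y ^ 2) * (c ^ 2 + s ^ 2) - 4 * x * y * c * s * ‖ip u v‖ := by
  classical
  obtain ⟨e, he1, he⟩ := Complex.exists_norm_eq_mul_self (ip u v)
  have hee : starRingEnd ℂ e * e = 1 := by
    rw [Complex.conj_mul', he1]; simp
  have he' : starRingEnd ℂ e * starRingEnd ℂ (ip u v) = ‖ip u v‖ := by
    simpa [mul_comm] using congrArg (starRingEnd ℂ) he.symm
  -- `(w₁, w₂)` is the hyperbolic rotation by `(c, s)` of `(x u, -y e v)`, so that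
  -- `x² u u* - y² v v* = w₁ w₁* - w₂ w₂*`; the phase `e` makes the cross terms of `‖w₁‖² + ‖w₂‖²`
  -- equal to `-4 x y c s ‖⟨u, v⟩‖`.
  set α₁ : ℂ := ↑(x * c)
  set β₁ : ℂ := -↑(y * s) * e
  set α₂ : ℂ := ↑(x * s)
  set β₂ : ℂ := -↑(y * c) * e
  have hcross : star α₁ * β₁ = star α₂ * β₂ := by
    simp only [α₁, β₁, α₂, β₂, Complex.star_def, Complex.conj_ofReal]; push_cast; ring
  have hcsC : (c : ℂ) ^ 2 - (s : ℂ) ^ 2 = 1 := by exact_mod_cast hcs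
  have hdiff : ip (α₁ • u + β₁ • v) (A *ᵥ (α₁ • u + β₁ • v))
      - ip (α₂ • u + β₂ • v) (A *ᵥ (α₂ • u + β₂ • v))
      = ((x ^ 2 : ℝ) : ℂ) * ip u (A *ᵥ u) - ((y ^ 2 : ℝ) : ℂ) * ip v (A *ᵥ v) := by
    rw [ip_mulVec_sub_of_star_mul_eq A u v hcross]
    simp only [α₁, β₁, α₂, β₂, Complex.star_def, map_mul, map_neg, Complex.conj_ofReal]
    push_cast
    linear_combination (↑x ^ 2 * ip u (A *ᵥ u) - ↑y ^ 2 * ip v (A *ᵥ v)) * hcsC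
      + ↑y ^ 2 * (↑s ^ 2 - ↑c ^ 2) * ip v (A *ᵥ v) * hee
  have hnorm : ip (α₁ • u + β₁ • v) (α₁ • u + β₁ • v) + ip (α₂ • u + β₂ • v) (α₂ • u + β₂ • v)
      = ((x ^ 2 + y ^ 2) * (c ^ 2 + s ^ 2) - 4 * x * y * c * s * ‖ip u v‖ : ℝ) := by
    have := congrArg₂ (· + ·) (ip_smul_add_smul_mulVec 1 u v α₁ β₁)
      (ip_smul_add_smul_mulVec 1 u v α₂ β₂)
    simp only [one_mulVec, hu, hv, ip_swap u v] at this
    rw [this]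
    simp only [α₁, β₁, α₂, β₂, Complex.star_def, map_mul, map_neg, Complex.conj_ofReal]
    push_cast
    linear_combination ↑y ^ 2 * (↑c ^ 2 + ↑s ^ 2) * hee + 2 * ↑x * ↑y * ↑c * ↑s * he
      - 2 * ↑x * ↑y * ↑c * ↑s * he'
  have h₁ := (abs_le.mp (hA (α₁ • u + β₁ • v))).2
  have h₂ := (abs_le.mp (hA (α₂ • u + β₂ • v))).1
  have hdiff_re := congrArg Complex.re hdiff
  have hnorm_re := congrArg Complex.re hnorm
  simp only [Complex.sub_re, Complex.add_re, Complex.re_ofReal_mul, Complex.ofReal_re]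
    at hdiff_re hnorm_re
  linarith

lemma mul_re_ip_sub_le_sqrt (A : Matrix k k ℂ) (hA : ∀ w, |(ip w (A *ᵥ w)).re| ≤ (ip w w).re)
    {u v : k → ℂ} (hu : ip u u = 1) (hv : ip v v = 1) {a b : ℝ} (ha : 0 ≤ a) (hb : 0 ≤ b) :
    a * (ip u (A *ᵥ u)).re - b * (ip v (A *ᵥ v)).re
      ≤ √((a + b) ^ 2 - 4 * a * b * ‖ip u v‖ ^ 2) := by
  have hfactor : (a + b) ^ 2 - 4 * a * b * ‖ip u v‖ ^ 2
      = (a + b - 2 * √a * √b * ‖ip u v‖) * (a + b + 2 * √a * √b * ‖ip u v‖) := by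
    ring_nf
    rw [Real.sq_sqrt ha, Real.sq_sqrt hb]
    ring
  rw [hfactor]
  refine le_sqrt_mul_of_forall_le_mul_add_div (by positivity) fun t ht => ?_
  set r := √t
  have hr : 0 < r := Real.sqrt_pos.mpr ht
  have hrt : r ^ 2 = t := Real.sq_sqrt ht.le
  have hcs : ((r + r⁻¹) / 2) ^ 2 - ((r - r⁻¹) / 2) ^ 2 = 1 := by
    field_simp
    ring
  have := sq_mul_re_ip_sub_le A hA hu hv √a √b hcs
  rw [Real.sq_sqrt ha, Real.sq_sqrt hb] at this
  calc 2 * (a * (ip u (A *ᵥ u)).re - b * (ip v (A *ᵥ v)).re)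
      ≤ 2 * ((a + b) * (((r + r⁻¹) / 2) ^ 2 + ((r - r⁻¹) / 2) ^ 2)
          - 4 * √a * √b * ((r + r⁻¹) / 2) * ((r - r⁻¹) / 2) * ‖ip u v‖) := by linarith
    _ = (a + b - 2 * √a * √b * ‖ip u v‖) * t + (a + b + 2 * √a * √b * ‖ip u v‖) / t := by
      rw [← hrt]
      field_simp
      ring

end SesquilinearForm

section POVM

variable {k ι : Type*} [Fintype k] [Fintype ι]

lemma re_ip_sub_mulVec (X Y : Matrix k k ℂ) (w : k → ℂ) :
    (ip w ((X - Y) *ᵥ w)).re = (ip w (X *ᵥ w)).re - (ip w (Y *ᵥ w)).re := by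
  simp [ip_eq_star_dotProduct, sub_mulVec, dotProduct_sub]

lemma sum_re_ip_mulVec_of_sum_eq_one [DecidableEq k] {P : ι → Matrix k k ℂ}
    (hP : ∑ i, P i = 1) (w : k → ℂ) : ∑ i, (ip w (P i *ᵥ w)).re = (ip w w).re := by
  rw [← Complex.re_sum]
  simp only [ip_eq_star_dotProduct, ← dotProduct_sum, ← sum_mulVec, hP, one_mulVec]

lemma abs_re_ip_sub_mulVec_le [DecidableEq k] {P : ι → Matrix k k ℂ}
    (hpos : ∀ i, (P i).PosSemidef) (hP : ∑ i, P i = 1) {i j : ι} (hij : i ≠ j) (w : k → ℂ) :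
    |(ip w ((P i - P j) *ᵥ w)).re| ≤ (ip w w).re := by
  have hnonneg (l : ι) : 0 ≤ (ip w (P l *ᵥ w)).re := (hpos l).re_dotProduct_nonneg w
  have hle : (ip w (P i *ᵥ w)).re + (ip w (P j *ᵥ w)).re ≤ (ip w w).re :=
    sum_re_ip_mulVec_of_sum_eq_one hP w ▸
      Finset.add_le_sum (fun l _ => hnonneg l) (Finset.mem_univ i) (Finset.mem_univ j) hij
  rw [re_ip_sub_mulVec, abs_le]
  constructor <;> linarith [hnonneg i, hnonneg j]

end POVM

theorem stmt14_general (n m : ℕ) (d : Fin n → Fin m → ℂ)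
    (hd : ∀ i, ip (d i) (d i) = 1)
    (q : Fin n → ℝ) (hq : ∀ i, 0 ≤ q i) (hq1 : ∑ i, q i = 1) :
    Ps d q ≤ 1 / n + (1 / (n : ℝ)) *
      ∑ i, ∑ k, if i < k then
        Real.sqrt ((q i + q k) ^ 2 - 4 * q i * q k * ‖ip (d i) (d k)‖ ^ 2)
      else 0 := by
  have hn : (0 : ℝ) < n := by
    rcases Nat.eq_zero_or_pos n with rfl | hn
    · simp at hq1
    · exact_mod_cast hn
  refine Real.sSup_le ?_ (by positivity)
  rintro _ ⟨P, hpos, hP, rfl⟩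
  set D : Fin n → Fin n → ℝ := fun i k => q i * (ip (d i) ((P i - P k) *ᵥ d i)).re
  have hrow (i : Fin n) : ∑ k, q i * (ip (d i) (P k *ᵥ d i)).re = q i := by
    rw [← Finset.mul_sum, sum_re_ip_mulVec_of_sum_eq_one hP, hd, Complex.one_re, mul_one]
  have hsum : ∑ i, ∑ k, D i k = n * ∑ i, q i * (ip (d i) (P i *ᵥ d i)).re - 1 := by
    simp only [D, re_ip_sub_mulVec, mul_sub, Finset.sum_sub_distrib, hrow, hq1, Finset.sum_const,
      Finset.card_univ, Fintype.card_fin, nsmul_eq_mul, Finset.mul_sum]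
  have hpair (i k : Fin n) (hik : i < k) :
      D i k + D k i ≤ √((q i + q k) ^ 2 - 4 * q i * q k * ‖ip (d i) (d k)‖ ^ 2) := by
    have hA := abs_re_ip_sub_mulVec_le hpos hP hik.ne
    have := mul_re_ip_sub_le_sqrt _ hA (hd i) (hd k) (hq i) (hq k)
    simp only [D, re_ip_sub_mulVec] at this ⊢
    linarith
  have hsum_le : n * ∑ i, q i * (ip (d i) (P i *ᵥ d i)).re - 1
      ≤ ∑ i, ∑ k, if i < k then
        √((q i + q k) ^ 2 - 4 * q i * q k * ‖ip (d i) (d k)‖ ^ 2) else 0 := by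
    rw [← hsum, sum_sum_eq_sum_sum_lt_add D (by simp [D, ip])]
    gcongr with i _ k _
    split_ifs with hik
    exacts [hpair i k hik, le_rfl]
  rw [← mul_one_add, one_div_mul_eq_div, le_div_iff₀ hn]
  linarith

/-- upper bound on the optimal success probability of minimum-error
discrimination of the detector states. -/
theorem stmt14 (n m : ℕ) (hn : 2 ≤ n) (d : Fin n → Fin m → ℂ)
    (hd : ∀ i, ip (d i) (d i) = 1)
    (q : Fin n → ℝ) (hq : ∀ i, 0 ≤ q i) (hq1 : ∑ i, q i = 1) :
    Ps d q ≤ 1 / n + (1 / (n : ℝ)) *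
      ∑ i, ∑ k, if i < k then
        Real.sqrt ((q i + q k) ^ 2 - 4 * q i * q k * ‖ip (d i) (d k)‖ ^ 2)
      else 0 :=
  stmt14_general n m d hd q hq hq1
end
end
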